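/- For any two distinct binary strings b and b' of the same length k, let s = (complement of b) concatenated with b and s' = (complement of b') concatenated with b' (each of length 2k). Then there exists a bit position i (with 0 ≤ i < 2k) such that the i-th bit of s is 1 and the i-th bit of s' is 0. -/
import Mathlib


/-- For any two distinct binary strings `b, b'` of length `k`, the extended strings
`s = complement(b) ++ b` and `s' = complement(b') ++ b'` (of length `2k`) differ in a
position where `s` has bit `1` and `s'` has bit `0`. -/
theorem meeting_protocol_bit (k : ℕ) (b b' : Fin k → Bool) (hne : b ≠ b') :
    ∃ i : Fin (k + k),
      Fin.append (fun j => !b j) b i = true ∧ Fin.append (fun j => !b' j) b' i = false := by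
  obtain ⟨j, hj⟩ := Function.ne_iff.mp hne
  cases hb : b j
  · refine ⟨Fin.castAdd k j, ?_, ?_⟩
    · simp [Fin.append_left, hb]
    · simp only [Fin.append_left]
      have : b' j = true := by
        cases hb' : b' j
        · exact absurd (hb.trans hb'.symm) hj
        · rfl
      simp [this]
  · refine ⟨Fin.natAdd k j, ?_, ?_⟩
    · rw [Fin.append_right]; simp [hb]
    · rw [Fin.append_right]
      cases hb' : b' j
      · rfl
      · exact absurd (hb.trans hb'.symm) hj
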